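/- arXiv:1804.09966 — 7 statements merged into one kernel-verified Lean document; each statement's English description precedes it below -/
import Mathlib

section
/- For every real x ≥ 1, the function h(x) = 1 - (3 + 1/x)·(x/(x+1))^{x+1} satisfies h(x) ≤ 0, with equality at x = 1. -/
/-! Write `1 - h x = exp (L x)` with `L x = log (3 + 1/x) - (x + 1) log (1 + 1/x)`.
Then `L 1 = log 4 - 2 log 2 = 0` and `L' x = 3/(3x+1) - log (1 + 1/x)`, which is nonnegative
for `x ≥ 2/3` because `exp u ≥ 1 + u + u²/2 ≥ 1 + 1/x` at `u = 3/(3x+1)`.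
So `L` is monotone, hence `L ≥ 0`, i.e. `h ≤ 0`, on `[1, ∞)`. -/

noncomputable def h (x : ℝ) : ℝ := 1 - (3 + 1/x) * (x/(x+1)) ^ (x+1)

open Real Set

noncomputable def logOneSubH (x : ℝ) : ℝ :=
  log (3 + 1/x) + (x + 1) * (log x - log (x + 1))

lemma h_eq_one_sub_exp_logOneSubH {x : ℝ} (hx : 0 < x) : h x = 1 - exp (logOneSubH x) := by
  rw [h, logOneSubH, exp_add, exp_log (by positivity), rpow_def_of_pos (by positivity),
    log_div hx.ne' (by positivity), mul_comm (x + 1)]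

lemma logOneSubH_one : logOneSubH 1 = 0 := by
  have h4 : log (4 : ℝ) = 2 * log 2 := by
    rw [show (4 : ℝ) = 2 ^ 2 by norm_num, log_pow, Nat.cast_ofNat]
  norm_num [logOneSubH, h4]

lemma log_add_one_sub_log_le {x : ℝ} (hx : 2/3 ≤ x) : log (x + 1) - log x ≤ 3/(3*x + 1) := by
  have hx0 : 0 < x := by linarith
  rw [← log_div (by linarith) hx0.ne', log_le_iff_le_exp (by positivity)]
  refine le_trans ?_ (quadratic_le_exp_of_nonneg (by positivity))
  have key : 0 ≤ (3*x - 2) / (2*x*(3*x + 1)^2) := div_nonneg (by linarith) (by positivity)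
  have e : 1 + 3/(3*x + 1) + (3/(3*x + 1))^2/2 - (x + 1)/x = (3*x - 2) / (2*x*(3*x + 1)^2) := by
    field_simp; ring
  linarith

lemma hasDerivAt_logOneSubH {x : ℝ} (hx : 0 < x) :
    HasDerivAt logOneSubH (3/(3*x + 1) - (log (x + 1) - log x)) x := by
  have hx1 : x + 1 ≠ 0 := by positivity
  have d1 : HasDerivAt (fun y : ℝ => 3 + 1/y) (-(x^2)⁻¹) x := by
    simpa [one_div] using (hasDerivAt_inv hx.ne').const_add 3
  have d2 : HasDerivAt (fun y : ℝ => y + 1) 1 x := (hasDerivAt_id x).add_const 1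
  have d3 := (d1.log (by positivity)).add (d2.mul ((hasDerivAt_log hx.ne').sub (d2.log hx1)))
  refine d3.congr_deriv ?_
  simp only [Pi.sub_apply, one_mul]
  field_simp
  ring

lemma monotoneOn_logOneSubH : MonotoneOn logOneSubH (Ici (2/3)) := by
  have pos : ∀ x ∈ Ici (2/3 : ℝ), 0 < x := fun x hx => by simp only [mem_Ici] at hx; linarith
  refine monotoneOn_of_hasDerivWithinAt_nonneg (convex_Ici _)
    (fun x hx => (hasDerivAt_logOneSubH (pos x hx)).continuousAt.continuousWithinAt)
    (fun x hx => (hasDerivAt_logOneSubH (pos x (interior_subset hx))).hasDerivWithinAt)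
    (fun x hx => ?_)
  rw [interior_Ici] at hx
  exact sub_nonneg.mpr (log_add_one_sub_log_le (le_of_lt hx))

theorem stmt0 : (∀ x : ℝ, 1 ≤ x → h x ≤ 0) ∧ h 1 = 0 := by
  refine ⟨fun x hx => ?_, ?_⟩
  · have hL : 0 ≤ logOneSubH x := logOneSubH_one ▸
      monotoneOn_logOneSubH (by norm_num) (by simp only [mem_Ici]; linarith) hx
    rw [h_eq_one_sub_exp_logOneSubH (by linarith)]
    linarith [add_one_le_exp (logOneSubH x)]
  · rw [h_eq_one_sub_exp_logOneSubH one_pos, logOneSubH_one, exp_zero, sub_self]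
end

section
/- For every x > 1, ∂τ/∂t(x, x) < 0, where τ(x,t) = (1/x)(t - (t+x+1)(t/(1+t))^{x+1}); equivalently, (1/x)·(1 - (3 + 1/x)·(x/(1+x))^{x+1}) < 0 for all x > 1. -/
/-!
Differentiating at `t = x` gives the formula, because `(x/(1+x))^x = (x/(1+x))^(x+1) · (1+x)/x`.
The sign claim is `(1 + 1/x)^(x+1) < 3 + 1/x`. In logarithms, the gap
`g x = log (3 + 1/x) - (x+1) log (1 + 1/x)` vanishes at `x = 1` (as `4 = 2^2`) and
`g' x = 3/(3x+1) - log (1 + 1/x)` is positive, by the Padé-type bound `log (1+u) < 3u/(3+u)`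
for `0 < u ≤ 3`, itself proved by monotonicity since the difference has derivative
`u(3-u)/((3+u)^2(1+u))`.
-/

noncomputable def tau (x t : ℝ) : ℝ := (1/x) * (t - (t + x + 1) * (t/(1+t)) ^ (x+1))

open Real Set

lemma strictMonoOn_of_hasDerivAt_pos {D : Set ℝ} (hD : Convex ℝ D) {f f' : ℝ → ℝ}
    (hf : ∀ y ∈ D, HasDerivAt f (f' y) y) (hf'₀ : ∀ y ∈ interior D, 0 < f' y) :
    StrictMonoOn f D :=
  strictMonoOn_of_hasDerivWithinAt_pos hD
    (fun y hy ↦ (hf y hy).continuousAt.continuousWithinAt)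
    (fun y hy ↦ (hf y (interior_subset hy)).hasDerivWithinAt) hf'₀

lemma hasDerivAt_tau (x : ℝ) {t : ℝ} (ht : 0 < t) :
    HasDerivAt (tau x)
      ((1/x) * (1 - ((t/(1+t)) ^ (x+1) + (t + x + 1) * ((x+1) / (1+t)^2 * (t/(1+t)) ^ x)))) t := by
  have h1t : 1 + t ≠ 0 := by positivity
  have hq : HasDerivAt (fun s : ℝ ↦ s/(1+s)) (1/(1+t)^2) t :=
    ((hasDerivAt_id t).div ((hasDerivAt_id t).const_add 1) h1t).congr_deriv (by simp)
  have hpow := hq.rpow_const (p := x+1) (Or.inl (by positivity))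
  have hprod := (((hasDerivAt_id t).add_const x).add_const 1).mul hpow
  refine (((hasDerivAt_id t).sub hprod).const_mul (1/x)).congr_deriv ?_
  simp only [add_sub_cancel_right, id_eq]
  ring

lemma deriv_tau_self {x : ℝ} (hx : 0 < x) :
    deriv (tau x) x = (1/x) * (1 - (3 + 1/x) * (x/(1+x)) ^ (x+1)) := by
  rw [(hasDerivAt_tau x hx).deriv, rpow_add_one (by positivity)]
  field_simp
  ring

lemma log_one_add_lt_three_mul_div {u : ℝ} (hu : 0 < u) (hu3 : u ≤ 3) :
    log (1 + u) < 3 * u / (3 + u) := by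
  have hderiv : ∀ y ∈ Icc (0:ℝ) 3, HasDerivAt (fun u ↦ 3 * u / (3 + u) - log (1 + u))
      (y * (3 - y) / ((3 + y)^2 * (1 + y))) y := by
    rintro y ⟨hy0, -⟩
    have h3 : 3 + y ≠ 0 := by positivity
    have h1 : 1 + y ≠ 0 := by positivity
    refine ((((hasDerivAt_id y).const_mul 3).div ((hasDerivAt_id y).const_add 3) h3).sub
      (((hasDerivAt_id y).const_add 1).log h1)).congr_deriv ?_
    simp only [id_eq]
    field_simp
    ring
  have hmono := strictMonoOn_of_hasDerivAt_pos (convex_Icc 0 3) hderiv fun y hy ↦ by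
    rw [interior_Icc] at hy
    have h3 : 0 < 3 - y := by linarith [hy.2]
    have := hy.1
    positivity
  simpa using hmono (left_mem_Icc.2 (by norm_num)) ⟨hu.le, hu3⟩ hu

lemma hasDerivAt_log_three_add_inv_sub {y : ℝ} (hy : 0 < y) :
    HasDerivAt (fun x ↦ log (3 + x⁻¹) - (x + 1) * log (1 + x⁻¹))
      (3 / (3 * y + 1) - log (1 + y⁻¹)) y := by
  have hinv := hasDerivAt_inv hy.ne'
  have h3 : 3 + y⁻¹ ≠ 0 := by positivity
  have h1 : 1 + y⁻¹ ≠ 0 := by positivity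
  refine ((hinv.const_add 3).log h3 |>.sub
    (((hasDerivAt_id y).add_const 1).mul ((hinv.const_add 1).log h1))).congr_deriv ?_
  simp only [id_eq]
  field_simp
  ring

lemma one_add_inv_rpow_lt {x : ℝ} (hx : 1 < x) : (1 + x⁻¹) ^ (x + 1) < 3 + x⁻¹ := by
  have hmono := strictMonoOn_of_hasDerivAt_pos (convex_Ici 1)
    (fun y hy ↦ hasDerivAt_log_three_add_inv_sub (one_pos.trans_le hy)) fun y hy ↦ by
      rw [interior_Ici, mem_Ioi] at hy
      have hy0 : 0 < y := one_pos.trans hy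
      have hlog := log_one_add_lt_three_mul_div (inv_pos.2 hy0)
        ((inv_lt_one_of_one_lt₀ hy).le.trans (by norm_num))
      rwa [show 3 * y⁻¹ / (3 + y⁻¹) = 3 / (3 * y + 1) by field_simp, ← sub_pos] at hlog
  have hgap := hmono self_mem_Ici hx.le hx
  have hlog4 : log (3 + 1) = (1 + 1) * log (1 + 1) := by
    rw [show (3 : ℝ) + 1 = (1 + 1) ^ 2 by norm_num, log_pow]; norm_num
  simp only [inv_one, hlog4, sub_self] at hgap
  rw [rpow_def_of_pos (by positivity), ← lt_log_iff_exp_lt (by positivity)]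
  linarith

theorem stmt3 : ∀ x : ℝ, 1 < x →
    deriv (fun t => tau x t) x = (1/x) * (1 - (3 + 1/x) * (x/(1+x)) ^ (x+1)) ∧
    (1/x) * (1 - (3 + 1/x) * (x/(1+x)) ^ (x+1)) < 0 := by
  intro x hx
  have hx0 : 0 < x := one_pos.trans hx
  refine ⟨deriv_tau_self hx0, mul_neg_of_pos_of_neg (by positivity) (sub_neg.2 ?_)⟩
  have hbase : x/(1+x) = (1 + x⁻¹)⁻¹ := by field_simp; ring
  rw [hbase, inv_rpow (by positivity), one_div, ← div_eq_mul_inv,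
    one_lt_div (rpow_pos_of_pos (by positivity) _)]
  exact one_add_inv_rpow_lt hx
end

section
/- Let x ≥ 1 and let t₀ ∈ (0, x) satisfy the critical point equation 1 − (t₀/(1+t₀))^{x+1} − (t₀+x+1)(x+1)·(t₀/(1+t₀))^{x+1}/(t₀(1+t₀)) = 0. Then τ(x, t₀) = (1+x)·t₀ / (x² + (1+t₀)² + x(2+t₀)). -/
theorem stmt5 : ∀ x : ℝ, 1 ≤ x → ∀ t₀ : ℝ, t₀ ∈ Set.Ioo 0 x →
    1 - (t₀/(1+t₀)) ^ (x+1) - (t₀+x+1)*(x+1) * (t₀/(1+t₀)) ^ (x+1) / (t₀*(1+t₀)) = 0 →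
    tau x t₀ = (1+x)*t₀ / (x^2 + (1+t₀)^2 + x*(2+t₀)) := by
  intro x hx t₀ ht h
  obtain ⟨ht0, htx⟩ := ht
  have h1 : (0:ℝ) < 1 + t₀ := by linarith
  have hx0 : (0:ℝ) < x := by linarith
  set r := (t₀/(1+t₀)) ^ (x+1) with hr
  have key : t₀*(1+t₀) - r*(t₀*(1+t₀)) - (t₀+x+1)*(x+1)*r = 0 := by
    have ht' : t₀ * (1+t₀) ≠ 0 := by positivity
    field_simp at h
    linarith
  have hD : (0:ℝ) < x^2 + (1+t₀)^2 + x*(2+t₀) := by positivity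
  unfold tau
  rw [← hr]
  field_simp
  ring_nf
  nlinarith [key, sq_nonneg t₀, sq_nonneg x]
end

section
/- For all x ≥ 1, the function Φ(x) = 2·log(x+2) + 2(x+1)·log((x+2)/(x+1)) − log(7x² + 21x + 16) is positive; equivalently (x+2)^{2x+4}/(x+1)^{2x+2} > 7x² + 21x + 16. -/
/-!
Put `u = 1 / (x + 2) ∈ (0, 1/3]`. Then `7x² + 21x + 16 = (x + 2)² (7 - 7u + 2u²)` and
`2(x + 1) log((x + 2)/(x + 1)) = 2 (1 - u)/u · (-log (1 - u))`. The series of `-log (1 - u)` has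
positive terms, so truncating it after three terms bounds the latter below by `2 - s(u)` with
`s(u) = u + u²/3 + 2u³/3`, and it suffices that `7 - 7u + 2u² < exp (2 - s(u))`. The Padé bound
`exp s ≤ (2 + s)/(2 - s)` and `7.389 < e²` reduce this to a polynomial inequality on `(0, 1/3]`.
-/

open Real Finset

namespace Real

theorem sum_range_pow_div_le_neg_log_one_sub {u : ℝ} (h0 : 0 ≤ u) (h1 : u < 1) (n : ℕ) :
    ∑ i ∈ range n, u ^ (i + 1) / (i + 1) ≤ -log (1 - u) :=
  sum_le_hasSum _ (fun _ _ => by positivity)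
    (hasSum_pow_div_log_of_abs_lt_one (by rwa [abs_of_nonneg h0]))

theorem exp_two_gt_d3 : (7.389 : ℝ) < exp 2 := by
  rw [show (2 : ℝ) = 1 + 1 by norm_num, exp_add]
  nlinarith [exp_one_gt_d9]

end Real

noncomputable def cubicDefect (u : ℝ) : ℝ := u + u ^ 2 / 3 + 2 * u ^ 3 / 3

theorem log_quadratic_lt_two_sub_cubicDefect {u : ℝ} (h0 : 0 < u) (h1 : u ≤ 1 / 3) :
    log (7 - 7 * u + 2 * u ^ 2) < 2 - cubicDefect u := by
  have hs0 : 0 ≤ cubicDefect u := by unfold cubicDefect; positivity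
  have hs2 : cubicDefect u < 2 := by
    unfold cubicDefect
    nlinarith [pow_le_pow_left₀ h0.le h1 2, pow_le_pow_left₀ h0.le h1 3]
  have hpoly : (7 - 7 * u + 2 * u ^ 2) * (2 + cubicDefect u) < 7.389 * (2 - cubicDefect u) := by
    unfold cubicDefect
    nlinarith [mul_pos h0 h0, mul_nonneg h0.le (sub_nonneg.2 h1), pow_pos h0 3, pow_pos h0 4,
      pow_pos h0 5]
  have hpade : exp (cubicDefect u) * (2 - cubicDefect u) ≤ 2 + cubicDefect u :=
    (le_div_iff₀ (by linarith)).1 (exp_le_two_add_div_two_sub hs0 hs2)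
  have hsplit : exp 2 = exp (2 - cubicDefect u) * exp (cubicDefect u) := by
    rw [← exp_add, sub_add_cancel]
  refine (log_lt_iff_lt_exp (by nlinarith)).2 ?_
  nlinarith [exp_two_gt_d3, exp_pos (2 - cubicDefect u)]

theorem two_sub_cubicDefect_le_mul_log_div {x : ℝ} (hx : 0 < x + 1) :
    2 - cubicDefect (1 / (x + 2)) ≤ 2 * (x + 1) * log ((x + 2) / (x + 1)) := by
  have hx2 : x + 2 ≠ 0 := by linarith
  set u := 1 / (x + 2) with hu
  have hu0 : 0 < u := one_div_pos.2 (by linarith)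
  have hu1 : u < 1 := by rw [hu, div_lt_one (by linarith)]; linarith
  have hseries : u + u ^ 2 / 2 + u ^ 3 / 3 ≤ log ((x + 2) / (x + 1)) := by
    have h := sum_range_pow_div_le_neg_log_one_sub hu0.le hu1 3
    simp only [sum_range_succ, sum_range_zero] at h
    norm_num at h
    have hdiv : (x + 2) / (x + 1) = (1 - u)⁻¹ := by
      rw [hu, one_sub_div hx2, inv_div]; ring_nf
    rw [hdiv, log_inv]
    linarith
  calc 2 - cubicDefect u = 2 * (x + 1) * (u + u ^ 2 / 2 + u ^ 3 / 3) := by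
        rw [cubicDefect, hu]; field_simp; ring
    _ ≤ 2 * (x + 1) * log ((x + 2) / (x + 1)) := by gcongr

theorem log_quadratic_lt {x : ℝ} (hx : 1 ≤ x) :
    log (7 * x ^ 2 + 21 * x + 16) < 2 * log (x + 2) + (2 - cubicDefect (1 / (x + 2))) := by
  have hx2 : x + 2 ≠ 0 := by linarith
  set u := 1 / (x + 2) with hu
  have hu0 : 0 < u := one_div_pos.2 (by linarith)
  have hu1 : u ≤ 1 / 3 := by rw [hu, div_le_div_iff₀ (by linarith) (by norm_num)]; linarith
  have hfactor : 7 * x ^ 2 + 21 * x + 16 = (x + 2) ^ 2 * (7 - 7 * u + 2 * u ^ 2) := by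
    rw [hu]; field_simp; ring
  rw [hfactor, log_mul (by positivity) (by nlinarith), log_pow, Nat.cast_ofNat]
  linarith [log_quadratic_lt_two_sub_cubicDefect hu0 hu1]

theorem log_rpow_div_rpow {x : ℝ} (hx : 0 < x + 1) :
    log ((x + 2) ^ (2 * x + 4) / (x + 1) ^ (2 * x + 2))
      = 2 * log (x + 2) + 2 * (x + 1) * log ((x + 2) / (x + 1)) := by
  have hx2 : 0 < x + 2 := by linarith
  rw [log_div (rpow_pos_of_pos hx2 _).ne' (rpow_pos_of_pos hx _).ne', log_rpow hx2, log_rpow hx,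
    log_div hx2.ne' hx.ne']
  ring

theorem stmt6 : ∀ x : ℝ, 1 ≤ x →
    0 < 2 * Real.log (x+2) + 2*(x+1) * Real.log ((x+2)/(x+1)) - Real.log (7*x^2 + 21*x + 16) ∧
    7*x^2 + 21*x + 16 < (x+2) ^ (2*x+4) / (x+1) ^ (2*x+2) := by
  intro x hx
  have hx1 : 0 < x + 1 := by linarith
  have hΦ : 0 < 2 * log (x + 2) + 2 * (x + 1) * log ((x + 2) / (x + 1))
      - log (7 * x ^ 2 + 21 * x + 16) := by
    linarith [two_sub_cubicDefect_le_mul_log_div hx1, log_quadratic_lt hx]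
  refine ⟨hΦ, ?_⟩
  rw [← log_lt_log_iff (by positivity) (by positivity), log_rpow_div_rpow hx1]
  linarith
end

section
/- Φ'(x) = 2·log((x+2)/(x+1)) − (21 + 14x)/(16 + 21x + 7x²) is positive for all x ≥ 1. -/
/-! The series `log (1 + 1/a) = 2 ∑ₖ (2a+1)^{-(2k+1)} / (2k+1)` has nonnegative terms, so its first
term gives `log ((x+2)/(x+1)) ≥ 2/(2x+3)`. It remains to check the rational inequality
`(21 + 14x)/(7x² + 21x + 16) < 4/(2x+3)`, whose cross-multiplied form is `63 + 84x + 28x² < 64 + 84x + 28x²`. -/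

open Real

lemma two_div_two_mul_add_one_le_log_one_add_inv {a : ℝ} (ha : 0 < a) :
    2 / (2 * a + 1) ≤ log (1 + a⁻¹) := by
  have h := le_hasSum (hasSum_log_one_add_inv ha) 0 fun k _ => by positivity
  simpa [div_eq_mul_inv] using h

lemma div_lt_four_div_two_mul_add_three {x : ℝ} (hx : 0 ≤ x) :
    (21 + 14 * x) / (16 + 21 * x + 7 * x ^ 2) < 4 / (2 * x + 3) := by
  rw [div_lt_div_iff₀ (by positivity) (by positivity)]
  linarith

theorem stmt7 : ∀ x : ℝ, 1 ≤ x →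
    0 < 2 * Real.log ((x+2)/(x+1)) - (21 + 14*x)/(16 + 21*x + 7*x^2) := by
  intro x hx
  have hlog : 2 / (2 * x + 3) ≤ log ((x + 2) / (x + 1)) := by
    have h := two_div_two_mul_add_one_le_log_one_add_inv (a := x + 1) (by linarith)
    rwa [show 1 + (x + 1)⁻¹ = (x + 2) / (x + 1) by field_simp; ring,
      show 2 * (x + 1) + 1 = 2 * x + 3 by ring] at h
  have hrat := div_lt_four_div_two_mul_add_three (x := x) (by linarith)
  rw [show 4 / (2 * x + 3) = 2 * (2 / (2 * x + 3)) by ring] at hrat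
  linarith
end

section
/- Fix x ≥ 1 and let k(u) = −1 + (1+u)(1+u + x(1+u+x)·log(1+1/u)) / (u(1+u) + (u+x+1)(x+1)) for u > 0. Then k is strictly decreasing on (0, x], i.e. k'(u) < 0 for all u ∈ (0, x]. -/
noncomputable def k (x u : ℝ) : ℝ :=
  -1 + (1+u)*(1+u + x*(1+u+x) * Real.log (1 + 1/u)) / (u*(1+u) + (u+x+1)*(x+1))

open Real Set

lemma mul_log_one_add_one_div_le_one {u : ℝ} (hu : 0 < u) : u * log (1 + 1/u) ≤ 1 := by
  have hlog : log (1 + 1/u) ≤ 1/u := by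
    linarith [log_le_sub_one_of_pos (x := 1 + 1/u) (by positivity)]
  calc u * log (1 + 1/u) ≤ u * (1/u) := by gcongr
    _ = 1 := by field_simp

lemma k_denom_pos {x u : ℝ} (hx : 0 ≤ x) (hu : 0 < u) :
    0 < u*(1+u) + (u+x+1)*(x+1) := by
  positivity

/-- The numerator is arranged so that, for `0 < u ≤ x`, each summand inside the bracket is
nonnegative, the last one by `u * log (1 + 1/u) ≤ 1`. -/
lemma hasDerivAt_k {x u : ℝ} (hx : 0 ≤ x) (hu : 0 < u) :
    HasDerivAt (k x)
      (-x * ((1+x) + u*(x-u) + x*(1+x)*(2+2*u+x)*(1 - u * log (1 + 1/u))) /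
        (u * (u*(1+u) + (u+x+1)*(x+1))^2)) u := by
  have hD := k_denom_pos hx hu
  have hid : HasDerivAt (fun u : ℝ => 1 + u) 1 u := (hasDerivAt_id' u).const_add 1
  have hlog : HasDerivAt (fun u : ℝ => log (1 + 1/u)) (-(1/u^2) / (1 + 1/u)) u := by
    have hinv : HasDerivAt (fun u : ℝ => 1 + 1/u) (-(1/u^2)) u := by
      simpa [one_div] using (hasDerivAt_inv hu.ne').const_add (1:ℝ)
    exact hinv.log (by positivity)
  have hnum : HasDerivAt (fun v => (1+v)*(1+v + x*(1+v+x) * log (1 + 1/v))) _ u :=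
    hid.mul (hid.add (((hid.add_const x).const_mul x).mul hlog))
  have hden : HasDerivAt (fun v => v*(1+v) + (v+x+1)*(x+1)) _ u :=
    ((hasDerivAt_id' u).mul hid).add (((hid.add_const x).mul_const (x+1)).congr_of_eventuallyEq
      (Filter.Eventually.of_forall fun v => by ring))
  refine ((hnum.div hden hD.ne').const_add (-1)).congr_deriv ?_
  field_simp
  ring

lemma deriv_k_neg {x u : ℝ} (hx : 0 < x) (hu : 0 < u) (hux : u ≤ x) : deriv (k x) u < 0 := by
  rw [(hasDerivAt_k hx.le hu).deriv]
  have hlog := mul_log_one_add_one_div_le_one hu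
  have hbracket : 0 < (1+x) + u*(x-u) + x*(1+x)*(2+2*u+x)*(1 - u * log (1 + 1/u)) := by
    have hmiddle : 0 ≤ u*(x-u) := mul_nonneg hu.le (by linarith)
    have hlast : 0 ≤ x*(1+x)*(2+2*u+x)*(1 - u * log (1 + 1/u)) := by
      have : 0 ≤ 1 - u * log (1 + 1/u) := by linarith
      positivity
    linarith
  refine div_neg_of_neg_of_pos ?_ (mul_pos hu (pow_pos (k_denom_pos hx.le hu) 2))
  rw [neg_mul, neg_lt_zero]
  exact mul_pos hx hbracket

theorem stmt10 : ∀ x : ℝ, 1 ≤ x →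
    StrictAntiOn (fun u => k x u) (Set.Ioc 0 x) ∧
    ∀ u ∈ Set.Ioc (0:ℝ) x, deriv (fun u => k x u) u < 0 := by
  intro x hx
  have hx0 : 0 < x := by linarith
  have hderiv : ∀ u ∈ Ioc 0 x, deriv (k x) u < 0 := fun u hu => deriv_k_neg hx0 hu.1 hu.2
  refine ⟨strictAntiOn_of_deriv_neg (convex_Ioc 0 x) ?_ ?_, hderiv⟩
  · exact fun u hu => (hasDerivAt_k hx0.le hu.1).continuousAt.continuousWithinAt
  · rw [interior_Ioc]
    exact fun u hu => hderiv u (Ioo_subset_Ioc_self hu)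
end

section
/- Let n ≥ 1 be an integer and let t_{n+1} ∈ (0, n+1) be the unique critical point of t ↦ τ(n+1, t). Then ∂τ/∂t(n, t_{n+1}) = −(1+n)(1+n−t_{n+1}) / (n·t_{n+1}·((2+n)² + (3+n)·t_{n+1} + t_{n+1}²)) < 0; consequently the sequence (t_n) of maximizers is strictly increasing. -/
/-!
For natural `m` and `s > 0` one has `m · ∂τ/∂t(m, s) = 1 - h_m(s)` with
`h_m(s) = s^m (s² + (m+2)s + (m+1)²) / (1+s)^(m+2)` (below, `h_m = tauDefect m`), and
`h_{m+1} / h_m` is an explicit rational function of `s`. Hence the critical equation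
`h_{n+1}(t) = 1` determines `h_n(t)`, which gives the closed form of `∂τ/∂t(n, t)`. Its sign says
`h_n(t) > 1 = h_n(t_n)`, and `h_n` is strictly increasing on `[0, n+1]`, so `t_n < t`.
-/

open Set

noncomputable def tauDefect (m : ℕ) (s : ℝ) : ℝ :=
  s ^ m * (s ^ 2 + (m + 2) * s + (m + 1) ^ 2) / (1 + s) ^ (m + 2)

lemma tau_natCast (m : ℕ) (s : ℝ) :
    tau m s = (1 / m) * (s - (s + m + 1) * (s / (1 + s)) ^ (m + 1)) := by
  rw [tau, ← Nat.cast_succ, Real.rpow_natCast]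

lemma hasDerivAt_tau_natCast (m : ℕ) {s : ℝ} (hs : 1 + s ≠ 0) :
    HasDerivAt (tau m) ((1 - tauDefect m s) / m) s := by
  have hq : HasDerivAt (fun x : ℝ => x / (1 + x)) (1 / (1 + s) ^ 2) s :=
    ((hasDerivAt_id' s).fun_div ((hasDerivAt_id' s).const_add 1) hs).congr_deriv
      (by field_simp; ring)
  rw [funext (tau_natCast m)]
  refine (((hasDerivAt_id' s).fun_sub
    ((((hasDerivAt_id' s).add_const (m : ℝ)).add_const 1).fun_mul (hq.fun_pow (m + 1)))).const_mul
    (1 / (m : ℝ))).congr_deriv ?_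
  rw [tauDefect, Nat.add_sub_cancel, div_pow, div_pow]
  field_simp
  push_cast
  ring

lemma deriv_tau_natCast (m : ℕ) {s : ℝ} (hs : 1 + s ≠ 0) :
    deriv (fun x => tau m x) s = (1 - tauDefect m s) / m :=
  (hasDerivAt_tau_natCast m hs).deriv

lemma deriv_tau_natCast_eq_zero_iff {m : ℕ} (hm : m ≠ 0) {s : ℝ} (hs : 1 + s ≠ 0) :
    deriv (fun x => tau m x) s = 0 ↔ tauDefect m s = 1 := by
  rw [deriv_tau_natCast m hs, div_eq_zero_iff, sub_eq_zero, eq_comm]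
  simp [hm]

lemma tauDefect_succ (m : ℕ) {s : ℝ} (hs : 1 + s ≠ 0) :
    (1 + s) * (s ^ 2 + (m + 2) * s + (m + 1) ^ 2) * tauDefect (m + 1) s =
      s * (s ^ 2 + (m + 3) * s + (m + 2) ^ 2) * tauDefect m s := by
  simp only [tauDefect]
  field_simp
  push_cast
  ring

lemma hasDerivAt_tauDefect_succ (m : ℕ) {s : ℝ} (hs : 1 + s ≠ 0) :
    HasDerivAt (tauDefect (m + 1))
      ((m + 1) * (m + 2) * (m + 2 - s) * s ^ m / (1 + s) ^ (m + 4)) s := by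
  have hf : tauDefect (m + 1) = fun x : ℝ =>
      x ^ (m + 1) * (x ^ 2 + ((m : ℝ) + 3) * x + ((m : ℝ) + 2) ^ 2) / (1 + x) ^ (m + 3) := by
    funext x; unfold tauDefect; push_cast; ring_nf
  rw [hf]
  refine (((hasDerivAt_pow (m + 1) s).fun_mul ((((hasDerivAt_pow 2 s).fun_add
    ((hasDerivAt_id' s).const_mul ((m : ℝ) + 3))).add_const (((m : ℝ) + 2) ^ 2)))).fun_div
    (((hasDerivAt_id' s).const_add 1).fun_pow (m + 3)) (pow_ne_zero _ hs)).congr_deriv ?_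
  field_simp
  push_cast
  ring

lemma tauDefect_succ_strictMonoOn (m : ℕ) :
    StrictMonoOn (tauDefect (m + 1)) (Icc 0 (m + 2)) := by
  apply strictMonoOn_of_deriv_pos (convex_Icc _ _)
  · refine fun x hx => (hasDerivAt_tauDefect_succ m ?_).continuousAt.continuousWithinAt
    linarith [hx.1]
  · intro x hx
    rw [interior_Icc] at hx
    rw [(hasDerivAt_tauDefect_succ m (by linarith [hx.1])).deriv]
    have : 0 < (m : ℝ) + 2 - x := by linarith [hx.2]
    have := hx.1
    positivity

theorem stmt15 : ∀ n : ℕ, 1 ≤ n → ∀ t : ℝ, t ∈ Set.Ioo 0 ((n:ℝ)+1) →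
    deriv (fun s => tau ((n:ℝ)+1) s) t = 0 →
    (deriv (fun s => tau (n:ℝ) s) t =
        -((1+(n:ℝ))*(1+(n:ℝ)-t)) / ((n:ℝ)*t*((2+(n:ℝ))^2 + (3+(n:ℝ))*t + t^2)) ∧
      deriv (fun s => tau (n:ℝ) s) t < 0) ∧
    ∀ tn : ℝ, tn ∈ Set.Ioo 0 (n:ℝ) → deriv (fun s => tau (n:ℝ) s) tn = 0 → tn < t := by
  intro n hn t ⟨ht0, htn⟩ hcrit
  have hn0 : (0 : ℝ) < n := by exact_mod_cast hn
  rw [← Nat.cast_succ, deriv_tau_natCast_eq_zero_iff n.succ_ne_zero (by linarith)] at hcrit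
  have hrec := tauDefect_succ n (s := t) (by linarith)
  rw [hcrit] at hrec
  have hformula : deriv (fun s => tau n s) t =
      -((1 + n) * (1 + n - t)) / (n * t * ((2 + n) ^ 2 + (3 + n) * t + t ^ 2)) := by
    rw [deriv_tau_natCast n (by linarith)]
    field_simp
    linear_combination hrec
  have hneg : deriv (fun s => tau n s) t < 0 := by
    rw [hformula, neg_div]
    exact neg_neg_of_pos (div_pos (mul_pos (by linarith) (by linarith)) (by positivity))
  refine ⟨⟨hformula, hneg⟩, fun tn ⟨htn0, htnn⟩ hcrit_n => ?_⟩
  have h_gt : 1 < tauDefect n t := by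
    rwa [deriv_tau_natCast n (by linarith), div_lt_iff₀ hn0, zero_mul, sub_neg] at hneg
  rw [deriv_tau_natCast_eq_zero_iff (by omega) (by linarith)] at hcrit_n
  obtain ⟨k, rfl⟩ := Nat.exists_eq_add_of_le' hn
  push_cast at htn htnn
  rw [← hcrit_n] at h_gt
  exact ((tauDefect_succ_strictMonoOn k).lt_iff_lt ⟨htn0.le, by linarith⟩
    ⟨ht0.le, by linarith⟩).1 h_gt
end
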